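/- arXiv:math/0407429 — 2 statements merged into one kernel-verified Lean document; each statement's English description precedes it below -/
import Mathlib

section
/- For i, j ≥ 1 with i + j ≤ n + 1, there exists a surjective homomorphism of ℂ[S_n]-modules from R^n_{i,j} onto the permutation module ℂ[S_n/S_{n−i−j+2}] (the induction of the trivial module from the subgroup S_{n−i−j+2} fixing the first i+j−2 letters); in particular dim_ℂ R^n_{i,j} ≥ n!/(n−i−j+2)!. -/
open MvPolynomial

set_option maxHeartbeats 1000000
set_option synthInstance.maxHeartbeats 400000

noncomputable section

/-- the ideal `(x₁y₁, …, xₙyₙ)`. -/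
abbrev Bideal (n : ℕ) : Ideal (MvPolynomial (Fin n ⊕ Fin n) ℂ) :=
  Ideal.span (Set.range fun i : Fin n => X (Sum.inl i) * X (Sum.inr i))

/-- `B n = ℂ[x₁,…,xₙ,y₁,…,yₙ]/(x₁y₁,…,xₙyₙ)`, the `n`-th tensor power of `ℂ[x,y]/(xy)`.
The variable `x_i` is `X (Sum.inl i)` and `y_i` is `X (Sum.inr i)`. -/
abbrev B (n : ℕ) : Type := MvPolynomial (Fin n ⊕ Fin n) ℂ ⧸ Bideal n

abbrev mkB (n : ℕ) : MvPolynomial (Fin n ⊕ Fin n) ℂ →ₐ[ℂ] B n :=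
  Ideal.Quotient.mkₐ ℂ (Bideal n)

def xv (n : ℕ) (i : Fin n) : B n := mkB n (X (Sum.inl i))
def yv (n : ℕ) (i : Fin n) : B n := mkB n (X (Sum.inr i))

/-- the action of a permutation `σ ∈ Sₙ` on `B n`: `σ·xᵢ = x_{σ i}`, `σ·yᵢ = y_{σ i}`. -/
def permB (n : ℕ) (σ : Equiv.Perm (Fin n)) : B n →ₐ[ℂ] B n :=
  Ideal.Quotient.liftₐ (Bideal n)
    ((mkB n).comp (MvPolynomial.rename (Sum.map ⇑σ ⇑σ)))
    (by
      intro a ha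
      have h : Bideal n ≤ RingHom.ker ((mkB n).comp (MvPolynomial.rename (Sum.map ⇑σ ⇑σ))).toRingHom := by
        rw [Ideal.span_le]
        rintro _ ⟨i, rfl⟩
        simp only [SetLike.mem_coe, RingHom.mem_ker, AlgHom.toRingHom_eq_coe, RingHom.coe_coe,
          AlgHom.comp_apply, map_mul, rename_X, Sum.map_inl, Sum.map_inr]
        rw [← map_mul, Ideal.Quotient.mkₐ_eq_mk, Ideal.Quotient.eq_zero_iff_mem]
        exact Ideal.subset_span ⟨σ i, rfl⟩
      exact h ha)

/-- evaluation at the origin. -/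
def ev0 (n : ℕ) : B n →ₐ[ℂ] ℂ :=
  Ideal.Quotient.liftₐ (Bideal n) (aeval fun _ => (0 : ℂ))
    (by
      intro a ha
      have h : Bideal n ≤ RingHom.ker (aeval (R := ℂ) fun _ : Fin n ⊕ Fin n => (0 : ℂ)).toRingHom := by
        rw [Ideal.span_le]
        rintro _ ⟨i, rfl⟩
        simp [RingHom.mem_ker]
      exact h ha)

/-- `Jₙ`, the ideal of `B n` generated by the `Sₙ`-invariant elements vanishing at the origin. -/
def Jn (n : ℕ) : Ideal (B n) :=
  Ideal.span {p : B n | (∀ σ : Equiv.Perm (Fin n), permB n σ p = p) ∧ ev0 n p = 0}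

/-- the symmetric coinvariant algebra `Rₙ = Bₙ/Jₙ`. -/
abbrev Rn (n : ℕ) : Type := B n ⧸ Jn n

/-- the `k`-th elementary symmetric polynomial `e_k` in the `x` variables. -/
def eX (n k : ℕ) : B n :=
  ∑ S ∈ Finset.powersetCard k (Finset.univ : Finset (Fin n)), ∏ t ∈ S, xv n t

/-- the `k`-th elementary symmetric polynomial `f_k` in the `y` variables. -/
def fY (n k : ℕ) : B n :=
  ∑ S ∈ Finset.powersetCard k (Finset.univ : Finset (Fin n)), ∏ t ∈ S, yv n t

/-- the generating set `S^n_{i,j}` of the ideal `I^n_{i,j}`: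
`e₁,…,e_{i−1}`, all `x_I` with `|I| = i`, `f₁,…,f_{j−1}`, all `y_J` with `|J| = j`. -/
def Sij (n i j : ℕ) : Set (B n) :=
  {p | ∃ k, 1 ≤ k ∧ k < i ∧ p = eX n k} ∪
  {p | ∃ I : Finset (Fin n), I.card = i ∧ p = ∏ t ∈ I, xv n t} ∪
  {p | ∃ k, 1 ≤ k ∧ k < j ∧ p = fY n k} ∪
  {p | ∃ J : Finset (Fin n), J.card = j ∧ p = ∏ t ∈ J, yv n t}

/-- the ideal `I^n_{i,j}`; `R^n_{i,j} = B n ⧸ Iij n i j`. -/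
def Iij (n i j : ℕ) : Ideal (B n) := Ideal.span (Sij n i j)

/-- the subgroup `S_{n-m} ≤ Sₙ` of permutations fixing the first `m` letters. -/
def fixLT (n m : ℕ) : Subgroup (Equiv.Perm (Fin n)) where
  carrier := {σ | ∀ k : Fin n, (k : ℕ) < m → σ k = k}
  one_mem' := fun _ _ => rfl
  mul_mem' := by
    intro a b ha hb k hk
    have : (a * b) k = a (b k) := rfl
    rw [this, hb k hk, ha k hk]
  inv_mem' := by
    intro a ha k hk
    have := ha k hk
    conv_lhs => rw [← this]
    exact a.symm_apply_apply k

/-- the left regular action of `Sₙ` on `ℂ[Sₙ]`, realized as functions on `Sₙ`. -/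
def regAct (n : ℕ) (σ : Equiv.Perm (Fin n)) (f : Equiv.Perm (Fin n) → ℂ) :
    Equiv.Perm (Fin n) → ℂ := fun τ => f (σ⁻¹ * τ)

/-- the action of `Sₙ` on the permutation module `ℂ[Sₙ/S_{n-m}]`, realized as
functions on the coset space `Sₙ/S_{n-m}`. -/
def cosetAct (n m : ℕ) (σ : Equiv.Perm (Fin n))
    (f : Equiv.Perm (Fin n) ⧸ fixLT n m → ℂ) :
    Equiv.Perm (Fin n) ⧸ fixLT n m → ℂ := fun x => f (σ⁻¹ • x)


/-!
Let `ζ` be the point whose `x`-coordinates are `1, …, i - 1` at positions `0, …, i - 2` and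
whose `y`-coordinates are `i, …, i + j - 2` at positions `i - 1, …, i + j - 3`, all other
coordinates being `0`. Its nonzero coordinates are distinct, so its stabilizer in `Sₙ` is exactly
`S_{n-i-j+2}`, and functions on its orbit `Z` form the permutation module `ℂ[Sₙ/S_{n-i-j+2}]`.

Every generator of `I^n_{i,j}`, and every `x_t y_t`, is homogeneous of positive degree and
constant on `Z`: `e_k` and `f_k` are symmetric, while `x_I`, `y_J` and `x_t y_t` vanish on `Z`
because `ζ` has only `i - 1` nonzero `x`- and `j - 1` nonzero `y`-coordinates, on disjoint
positions. Hence each generator is the top-degree component of a polynomial vanishing on `Z`, so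
`I^n_{i,j}` lies in the associated graded ideal `gr I(Z)`.

Orbit harmonics then gives an equivariant surjection `ℂ[x, y] ⧸ gr I(Z) → ℂ[Z]`: by Maschke,
the values on `Z` of the polynomials of degree `< d` have an `Sₙ`-stable complement, and the
map sending `p` to the sum over `d` of the components of the values of its degree-`d` parts in
these complements is equivariant, surjective, and kills `gr I(Z)`.
-/

namespace Representation

variable {k G V : Type*} [Field k] [Group G] [Finite G] [NeZero (Nat.card G : k)]
  [AddCommGroup V] [Module k V]

theorem exists_equivariant_isProj (ρ : Representation k G V) (W : Submodule k V)
    (hW : ∀ g, ∀ v ∈ W, ρ g v ∈ W) :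
    ∃ π : V →ₗ[k] V, LinearMap.IsProj W π ∧ ∀ g, π ∘ₗ ρ g = ρ g ∘ₗ π := by
  obtain ⟨Q, hQ⟩ := exists_isCompl (⟨W, hW⟩ : Subrepresentation ρ)
  have hWQ : IsCompl W Q.toSubmodule :=
    ⟨disjoint_iff.2 (congrArg Subrepresentation.toSubmodule (disjoint_iff.1 hQ.disjoint)),
      codisjoint_iff.2 (congrArg Subrepresentation.toSubmodule (codisjoint_iff.1 hQ.codisjoint))⟩
  refine ⟨W.projection Q.toSubmodule hWQ,
    ⟨Submodule.projection_apply_mem hWQ, fun _ ↦ Submodule.projection_apply_of_mem_left hWQ⟩,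
    fun g ↦ ?_⟩
  have hcomm := (LinearMap.IsIdempotentElem.commute_iff (T := ρ g)
    (Submodule.isIdempotentElem_projection hWQ)).2
    ⟨by rw [Submodule.range_projection]; exact fun v hv ↦ hW g v hv,
     by rw [Submodule.ker_projection]; exact fun v hv ↦ Q.apply_mem_toSubmodule g hv⟩
  exact hcomm.eq

def ofMulActionFun (k G X : Type*) [CommSemiring k] [Group G] [MulAction G X] :
    Representation k G (X → k) where
  toFun g := LinearMap.funLeft k k (g⁻¹ • ·)
  map_one' := by ext; simp
  map_mul' g h := by ext; simp [mul_smul]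

@[simp]
lemma ofMulActionFun_apply {k G X : Type*} [CommSemiring k] [Group G] [MulAction G X] (g : G)
    (f : X → k) (x : X) : ofMulActionFun k G X g f x = f (g⁻¹ • x) := rfl

end Representation

lemma LinearMap.exists_comp_eq_of_ker_le {R M N P : Type*} [CommRing R] [AddCommGroup M]
    [Module R M] [AddCommGroup N] [Module R N] [AddCommGroup P] [Module R P]
    {f : M →ₗ[R] N} (hf : Function.Surjective f) (g : M →ₗ[R] P) (h : ker f ≤ ker g) :
    ∃ g' : N →ₗ[R] P, ∀ x, g' (f x) = g x :=
  ⟨(ker f).liftQ g h ∘ₗ (f.quotKerEquivOfSurjective hf).symm.toLinearMap,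
    fun x ↦ by simp [quotKerEquivOfSurjective_symm_apply]⟩

lemma exists_injective_orbitMap_of_stabilizer {G σ k : Type*} [Group G] [MulAction G σ]
    {ζ : σ → k} {H : Subgroup G} (hH : ∀ g, g ∈ H ↔ ∀ v, ζ (g • v) = ζ v) :
    ∃ pt : G ⧸ H → σ → k, Function.Injective pt ∧ ∀ (g : G) v, pt g v = ζ (g⁻¹ • v) := by
  refine ⟨Quotient.lift (fun g v ↦ ζ (g⁻¹ • v)) fun a b hab ↦ funext fun v ↦ ?_,
    fun x y hxy ↦ ?_, fun _ _ ↦ rfl⟩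
  · have := (hH _).1 (QuotientGroup.leftRel_apply.1 hab) (b⁻¹ • v)
    rwa [smul_smul, mul_assoc, mul_inv_cancel, mul_one] at this
  · induction x using QuotientGroup.induction_on with | H a =>
    induction y using QuotientGroup.induction_on with | H b =>
    refine QuotientGroup.eq.2 ((hH _).2 fun v ↦ ?_)
    have := congrFun hxy (b • v)
    simp only [Quotient.lift_mk] at this
    rwa [inv_smul_smul, smul_smul] at this

def orbitOfPoint (G : Type*) {σ k : Type*} [Group G] [MulAction G σ] (ζ : σ → k) :
    Set (σ → k) :=
  Set.range fun g : G ↦ fun v ↦ ζ (g⁻¹ • v)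

section Counting

open Finset

lemma Finset.prod_comp_eq_zero_of_card_lt {ι M : Type*} [Fintype ι] [CommMonoidWithZero M]
    [DecidableEq M] {w : ι → M} {f : ι → ι} (hf : Function.Injective f) {I : Finset ι}
    (h : #{t | w t ≠ 0} < #I) : ∏ t ∈ I, w (f t) = 0 := by
  by_contra hne
  have hle : #I ≤ #{t | w t ≠ 0} := Finset.card_le_card_of_injOn f
    (fun t ht ↦ by simpa using fun h0 ↦ hne (Finset.prod_eq_zero ht h0)) hf.injOn
  omega

lemma Fin.card_filter_le_of_val_mem {n : ℕ} {P : Fin n → Prop} [DecidablePred P]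
    {s : Finset ℕ} (h : ∀ t, P t → (t : ℕ) ∈ s) : #{t | P t} ≤ #s :=
  Finset.card_le_card_of_injOn Fin.val (fun t ht ↦ h t (Finset.mem_filter.1 ht).2)
    Fin.val_injective.injOn

end Counting

namespace MvPolynomial

section Homogeneous

variable {σ R : Type*} [CommSemiring R]

lemma isHomogeneous_prod_X {ι : Type*} (s : Finset ι) (f : ι → σ) :
    (∏ t ∈ s, X (f t) : MvPolynomial σ R).IsHomogeneous s.card := by
  simpa using IsHomogeneous.prod s (fun t ↦ (X (f t) : MvPolynomial σ R)) (fun _ ↦ 1)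
    (fun t _ ↦ isHomogeneous_X R (f t))

lemma isHomogeneous_esymm [Fintype σ] (d : ℕ) : (esymm σ R d).IsHomogeneous d :=
  IsHomogeneous.sum _ _ _ fun s hs ↦
    (Finset.mem_powersetCard.1 hs).2 ▸ isHomogeneous_prod_X s id

end Homogeneous

section GradedIdeal

variable {σ k : Type*} [CommSemiring k]

/-- The top-degree components of the polynomials vanishing on `Z`; they span `gr I(Z)`. -/
def leadingForms (Z : Set (σ → k)) : Set (MvPolynomial σ k) :=
  {p | ∃ d, p.IsHomogeneous d ∧ ∃ h : MvPolynomial σ k, h.totalDegree < d ∧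
    ∀ z ∈ Z, eval z p = eval z h}

lemma mul_mem_leadingForms {Z : Set (σ → k)} {p q : MvPolynomial σ k} {e : ℕ}
    (hq : q.IsHomogeneous e) (hp : p ∈ leadingForms Z) : q * p ∈ leadingForms Z := by
  obtain ⟨d, hpd, h, hhd, hph⟩ := hp
  refine ⟨e + d, hq.mul hpd, q * h, ?_, fun z hz ↦ by simp [hph z hz]⟩
  calc (q * h).totalDegree ≤ q.totalDegree + h.totalDegree := totalDegree_mul q h
    _ < e + d := add_lt_add_of_le_of_lt hq.totalDegree_le hhd

lemma mul_mem_span_leadingForms {Z : Set (σ → k)} (q : MvPolynomial σ k) {p : MvPolynomial σ k}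
    (hp : p ∈ Submodule.span k (leadingForms Z)) :
    q * p ∈ Submodule.span k (leadingForms Z) := by
  induction hp using Submodule.span_induction with
  | mem p hp =>
    rw [← sum_homogeneousComponent q, Finset.sum_mul]
    exact Submodule.sum_mem _ fun e _ ↦ Submodule.subset_span
      (mul_mem_leadingForms (homogeneousComponent_isHomogeneous e q) hp)
  | zero => simp
  | add p p' _ _ hp hp' => rw [mul_add]; exact Submodule.add_mem _ hp hp'
  | smul c p _ hp => rw [mul_smul_comm]; exact Submodule.smul_mem _ c hp

def grVanishingIdeal (Z : Set (σ → k)) : Ideal (MvPolynomial σ k) where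
  carrier := Submodule.span k (leadingForms Z)
  add_mem' := Submodule.add_mem _
  zero_mem' := Submodule.zero_mem _
  smul_mem' q _ hp := mul_mem_span_leadingForms q hp

lemma mem_grVanishingIdeal_of_eval_eq {Z : Set (σ → k)} {p : MvPolynomial σ k} {d : ℕ}
    (hp : p.IsHomogeneous d) (hd : 0 < d) (c : k) (hc : ∀ z ∈ Z, eval z p = c) :
    p ∈ grVanishingIdeal Z :=
  Submodule.subset_span ⟨d, hp, C c, by simpa using hd, fun z hz ↦ by simp [hc z hz]⟩

end GradedIdeal

section Interpolation

variable {σ k : Type*} [Field k]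

lemma exists_totalDegree_le_one_eval_eq {a b : σ → k} (hab : a ≠ b) :
    ∃ ℓ : MvPolynomial σ k, ℓ.totalDegree ≤ 1 ∧ eval a ℓ = 1 ∧ eval b ℓ = 0 := by
  obtain ⟨v, hv⟩ := Function.ne_iff.1 hab
  refine ⟨C (a v - b v)⁻¹ * (X v - C (b v)), ?_, by simp [sub_ne_zero.2 hv], by simp⟩
  calc _ ≤ (C (a v - b v)⁻¹ : MvPolynomial σ k).totalDegree + (X v - C (b v)).totalDegree :=
        totalDegree_mul _ _
    _ ≤ 0 + 1 := by
        gcongr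
        · simp
        · exact (totalDegree_sub_C_le _ _).trans (totalDegree_X v).le
    _ = 1 := zero_add 1

lemma exists_totalDegree_le_eval_eq {X : Type*} [Finite X] {pt : X → σ → k}
    (hpt : Function.Injective pt) (f : X → k) :
    ∃ p : MvPolynomial σ k, p.totalDegree ≤ Nat.card X ∧ ∀ x, eval (pt x) p = f x := by
  classical
  have := Fintype.ofFinite X
  have hsep (x₀ x : X) : ∃ ℓ : MvPolynomial σ k, ℓ.totalDegree ≤ 1 ∧
      (x ≠ x₀ → eval (pt x₀) ℓ = 1 ∧ eval (pt x) ℓ = 0) := by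
    by_cases hx : x = x₀
    · exact ⟨1, by simp, fun h ↦ absurd hx h⟩
    · obtain ⟨ℓ, hℓ, h₀, h₁⟩ := exists_totalDegree_le_one_eval_eq (hpt.ne (Ne.symm hx))
      exact ⟨ℓ, hℓ, fun _ ↦ ⟨h₀, h₁⟩⟩
  choose ℓ hℓdeg hℓ using hsep
  have hind (x₀ : X) : (∏ x ∈ Finset.univ.erase x₀, ℓ x₀ x).totalDegree ≤ Nat.card X ∧
      ∀ x, eval (pt x) (∏ y ∈ Finset.univ.erase x₀, ℓ x₀ y) = if x = x₀ then 1 else 0 := by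
    refine ⟨?_, fun x ↦ ?_⟩
    · calc _ ≤ ∑ y ∈ Finset.univ.erase x₀, (ℓ x₀ y).totalDegree := totalDegree_finsetProd _ _
        _ ≤ ∑ y ∈ Finset.univ.erase x₀, 1 := Finset.sum_le_sum fun y _ ↦ hℓdeg x₀ y
        _ ≤ Nat.card X := by simp [Nat.card_eq_fintype_card]
    · rw [map_prod]
      split_ifs with hx
      · subst hx
        exact Finset.prod_eq_one fun y hy ↦ (hℓ x y (Finset.ne_of_mem_erase hy)).1
      · exact Finset.prod_eq_zero (Finset.mem_erase.2 ⟨hx, Finset.mem_univ x⟩) (hℓ x₀ x hx).2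
  refine ⟨∑ x₀, C (f x₀) * ∏ y ∈ Finset.univ.erase x₀, ℓ x₀ y, ?_, fun x ↦ ?_⟩
  · refine (totalDegree_finsetSum _ _).trans (Finset.sup_le fun x₀ _ ↦ ?_)
    exact (totalDegree_mul _ _).trans (by simpa using (hind x₀).1)
  · simp [(hind _).2]

end Interpolation

section OrbitHarmonics

variable {σ k X G : Type*} [Field k] [Group G] [MulAction G σ] [MulAction G X]
  (pt : X → σ → k)

def evalOn : MvPolynomial σ k →ₗ[k] (X → k) :=
  LinearMap.pi fun x ↦ (aeval (pt x)).toLinearMap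

@[simp]
lemma evalOn_apply (p : MvPolynomial σ k) (x : X) : evalOn pt p x = eval (pt x) p := by
  simp [evalOn]

def lowDegreeValues (d : ℕ) : Submodule k (X → k) :=
  Submodule.span k (evalOn pt '' {p | p.totalDegree < d})

def gradedEvalOn (π : ℕ → Module.End k (X → k)) (N : ℕ) : MvPolynomial σ k →ₗ[k] (X → k) :=
  ∑ d ∈ Finset.range (N + 1), (1 - π d) ∘ₗ evalOn pt ∘ₗ homogeneousComponent d

lemma gradedEvalOn_apply (π : ℕ → Module.End k (X → k)) (N : ℕ) (p : MvPolynomial σ k) :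
    gradedEvalOn pt π N p = ∑ d ∈ Finset.range (N + 1),
      (evalOn pt (homogeneousComponent d p) - π d (evalOn pt (homogeneousComponent d p))) := by
  simp [gradedEvalOn, LinearMap.sum_apply]

variable {pt}

lemma evalOn_rename_smul (hpt : ∀ (g : G) x v, pt (g • x) v = pt x (g⁻¹ • v)) (g : G)
    (p : MvPolynomial σ k) :
    evalOn pt (rename (g • ·) p) = Representation.ofMulActionFun k G X g (evalOn pt p) := by
  ext x
  simp only [evalOn_apply, eval_rename, Representation.ofMulActionFun_apply]
  congr 2
  funext v
  simp [hpt]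

lemma ofMulActionFun_mem_lowDegreeValues (hpt : ∀ (g : G) x v, pt (g • x) v = pt x (g⁻¹ • v))
    (g : G) (d : ℕ) {f : X → k} (hf : f ∈ lowDegreeValues pt d) :
    Representation.ofMulActionFun k G X g f ∈ lowDegreeValues pt d := by
  induction hf using Submodule.span_induction with
  | mem f hf =>
    obtain ⟨p, hp, rfl⟩ := hf
    rw [← evalOn_rename_smul hpt]
    exact Submodule.subset_span ⟨_, (totalDegree_rename_le _ p).trans_lt hp, rfl⟩
  | zero => simp
  | add f f' _ _ hf hf' => rw [map_add]; exact Submodule.add_mem _ hf hf'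
  | smul c f _ hf => rw [map_smul]; exact Submodule.smul_mem _ c hf

variable {π : ℕ → Module.End k (X → k)}

lemma gradedEvalOn_rename_smul (hpt : ∀ (g : G) x v, pt (g • x) v = pt x (g⁻¹ • v))
    (hπ : ∀ d g, π d ∘ₗ Representation.ofMulActionFun k G X g =
      Representation.ofMulActionFun k G X g ∘ₗ π d)
    (N : ℕ) (g : G) (p : MvPolynomial σ k) :
    gradedEvalOn pt π N (rename (g • ·) p) =
      Representation.ofMulActionFun k G X g (gradedEvalOn pt π N p) := by
  simp only [gradedEvalOn_apply, map_sum, map_sub, ← rename_homogeneousComponent,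
    evalOn_rename_smul hpt]
  exact Finset.sum_congr rfl fun d _ ↦ congrArg _ (LinearMap.congr_fun (hπ d g) _)

lemma gradedEvalOn_eq_zero_of_mem_leadingForms
    (hπ : ∀ d, LinearMap.IsProj (lowDegreeValues pt d) (π d)) (N : ℕ) {p : MvPolynomial σ k}
    (hp : p ∈ leadingForms (Set.range pt)) : gradedEvalOn pt π N p = 0 := by
  obtain ⟨e, hpe, h, hhe, hph⟩ := hp
  have hval : evalOn pt p ∈ lowDegreeValues pt e := by
    have heq : evalOn pt p = evalOn pt h := by ext x; simp [hph (pt x) ⟨x, rfl⟩]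
    rw [heq]
    exact Submodule.subset_span ⟨h, hhe, rfl⟩
  rw [gradedEvalOn_apply]
  refine Finset.sum_eq_zero fun d _ ↦ ?_
  rw [homogeneousComponent_of_mem hpe]
  split_ifs with hde
  · rw [hde, (hπ e).map_id _ hval, sub_self]
  · simp

lemma evalOn_mem_range_gradedEvalOn (hπ : ∀ d, LinearMap.IsProj (lowDegreeValues pt d) (π d))
    {N : ℕ} {p : MvPolynomial σ k} (hp : p.totalDegree ≤ N) :
    evalOn pt p ∈ LinearMap.range (gradedEvalOn pt π N) := by
  induction hD : p.totalDegree using Nat.strong_induction_on generalizing p with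
  | _ D ih =>
  have hsum : ∑ d ∈ Finset.range (N + 1), homogeneousComponent d p = p := by
    rw [← Finset.sum_range_add_sum_Ico _ (show p.totalDegree + 1 ≤ N + 1 by omega),
      sum_homogeneousComponent, add_eq_left]
    exact Finset.sum_eq_zero fun d hd ↦
      homogeneousComponent_eq_zero d p (by simp at hd; omega)
  have hdecomp : evalOn pt p = gradedEvalOn pt π N p +
      ∑ d ∈ Finset.range (N + 1), π d (evalOn pt (homogeneousComponent d p)) := by
    rw [gradedEvalOn_apply, Finset.sum_sub_distrib, sub_add_cancel, ← map_sum, hsum]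
  rw [hdecomp]
  refine Submodule.add_mem _ (LinearMap.mem_range_self _ p) (Submodule.sum_mem _ fun d _ ↦ ?_)
  by_cases hdD : D < d
  · rw [homogeneousComponent_eq_zero d p (hD ▸ hdD), map_zero, map_zero]
    exact Submodule.zero_mem _
  · refine (Submodule.span_le.2 ?_) ((hπ d).map_mem _)
    rintro _ ⟨q, hq, rfl⟩
    exact ih _ (by simp at hq; omega) (by simp at hq; omega) rfl

variable [Finite G] [NeZero (Nat.card G : k)] [Finite X]

theorem exists_equivariant_surjection_of_injective (hpt_inj : Function.Injective pt)
    (hpt : ∀ (g : G) x v, pt (g • x) v = pt x (g⁻¹ • v)) :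
    ∃ F : MvPolynomial σ k →ₗ[k] (X → k), Function.Surjective F ∧
      (∀ g p, F (rename (g • ·) p) = Representation.ofMulActionFun k G X g (F p)) ∧
      ∀ p ∈ grVanishingIdeal (Set.range pt), F p = 0 := by
  choose π hπ hπ_comm using fun d ↦ (Representation.ofMulActionFun k G X).exists_equivariant_isProj
    (lowDegreeValues pt d) fun g _ ↦ ofMulActionFun_mem_lowDegreeValues hpt g d
  refine ⟨gradedEvalOn pt π (Nat.card X), fun f ↦ ?_, gradedEvalOn_rename_smul hpt hπ_comm _,
    fun p hp ↦ ?_⟩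
  · obtain ⟨p, hp, hpf⟩ := exists_totalDegree_le_eval_eq hpt_inj f
    obtain ⟨q, hq⟩ := evalOn_mem_range_gradedEvalOn hπ hp
    exact ⟨q, hq.trans (by ext x; simp [hpf])⟩
  · induction hp using Submodule.span_induction with
    | mem p hp => exact gradedEvalOn_eq_zero_of_mem_leadingForms hπ _ hp
    | zero => simp
    | add p q _ _ hp hq => simp [hp, hq]
    | smul c p _ hp => simp [hp]

end OrbitHarmonics

theorem exists_equivariant_surjection_of_stabilizer {σ k G : Type*} [Field k] [Group G]
    [Finite G] [NeZero (Nat.card G : k)] [MulAction G σ] {ζ : σ → k} {H : Subgroup G}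
    (hH : ∀ g, g ∈ H ↔ ∀ v, ζ (g • v) = ζ v) :
    ∃ F : MvPolynomial σ k →ₗ[k] (G ⧸ H → k), Function.Surjective F ∧
      (∀ g p, F (rename (g • ·) p) = Representation.ofMulActionFun k G (G ⧸ H) g (F p)) ∧
      ∀ p ∈ grVanishingIdeal (orbitOfPoint G ζ), F p = 0 := by
  obtain ⟨pt, hpt_inj, hpt⟩ := exists_injective_orbitMap_of_stabilizer hH
  have hrange : Set.range pt = orbitOfPoint G ζ := by
    ext z
    constructor
    · rintro ⟨x, rfl⟩
      induction x using QuotientGroup.induction_on with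
      | H g => exact ⟨g, _root_.funext (hpt g · |>.symm)⟩
    · rintro ⟨g, rfl⟩
      exact ⟨g, _root_.funext (hpt g)⟩
  rw [← hrange]
  refine exists_equivariant_surjection_of_injective hpt_inj fun g x v ↦ ?_
  induction x using QuotientGroup.induction_on with
  | H g' => rw [MulAction.Quotient.smul_coe, hpt, hpt, smul_eq_mul, mul_inv_rev, mul_smul]

end MvPolynomial

section SymmetricGroup

variable {n : ℕ}

lemma val_apply_lt_iff_of_mem_fixLT {m : ℕ} {τ : Equiv.Perm (Fin n)} (hτ : τ ∈ fixLT n m)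
    (k : Fin n) : (τ k : ℕ) < m ↔ (k : ℕ) < m := by
  refine ⟨fun h ↦ ?_, fun h ↦ by rwa [hτ k h]⟩
  rwa [τ.injective (hτ (τ k) h)] at h

lemma card_fixLT (n m : ℕ) : Nat.card (fixLT n m) = (n - m).factorial := by
  classical
  have e : fixLT n m ≃ Equiv.Perm {k : Fin n // ¬ (k : ℕ) < m} :=
    (Equiv.subtypeEquivRight fun τ ↦ by simp only [not_not]; exact Iff.rfl).trans
      (Equiv.Perm.subtypeEquivSubtypePerm fun k : Fin n ↦ ¬ (k : ℕ) < m).symm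
  rw [Nat.card_congr e, Nat.card_perm, Nat.card_eq_fintype_card, Fintype.card_subtype_compl,
    Fintype.card_subtype, Fin.card_filter_val_lt, Fintype.card_fin]
  congr 1
  omega

lemma card_quotient_fixLT (n m : ℕ) :
    Nat.card (Equiv.Perm (Fin n) ⧸ fixLT n m) = n.factorial / (n - m).factorial := by
  have h := Subgroup.card_eq_card_quotient_mul_card_subgroup (fixLT n m)
  rw [card_fixLT, Nat.card_perm, Nat.card_fin] at h
  rw [h, Nat.mul_div_cancel _ (Nat.factorial_pos _)]

lemma rank_fun_quotient_fixLT (n m : ℕ) :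
    Module.rank ℂ (Equiv.Perm (Fin n) ⧸ fixLT n m → ℂ) = ↑(n.factorial / (n - m).factorial) := by
  have := Fintype.ofFinite (Equiv.Perm (Fin n) ⧸ fixLT n m)
  rw [rank_fun', ← Nat.card_eq_fintype_card, card_quotient_fixLT]

end SymmetricGroup

section Generators

variable {n : ℕ} {ζ : Fin n ⊕ Fin n → ℂ} {ι : Fin n → Fin n ⊕ Fin n}

lemma rename_esymm_mem_grVanishingIdeal (hι : ∀ (τ : Equiv.Perm (Fin n)) t, τ • ι t = ι (τ t))
    {d : ℕ} (hd : 0 < d) :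
    rename ι (esymm (Fin n) ℂ d) ∈ grVanishingIdeal (orbitOfPoint (Equiv.Perm (Fin n)) ζ) := by
  refine mem_grVanishingIdeal_of_eval_eq ((isHomogeneous_esymm d).rename_isHomogeneous) hd
    (eval (ζ ∘ ι) (esymm (Fin n) ℂ d)) ?_
  rintro _ ⟨τ, rfl⟩
  have : (fun v ↦ ζ (τ⁻¹ • v)) ∘ ι = (ζ ∘ ι) ∘ ⇑τ⁻¹ := funext fun t ↦ by simp [hι]
  rw [eval_rename, this, ← eval_rename, rename_esymm]

lemma prod_X_mem_grVanishingIdeal (hι : ∀ (τ : Equiv.Perm (Fin n)) t, τ • ι t = ι (τ t))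
    {I : Finset (Fin n)} (hI : (Finset.univ.filter fun t ↦ ζ (ι t) ≠ 0).card < I.card) :
    ∏ t ∈ I, X (ι t) ∈ grVanishingIdeal (orbitOfPoint (Equiv.Perm (Fin n)) ζ) := by
  refine mem_grVanishingIdeal_of_eval_eq (isHomogeneous_prod_X I ι) (by omega) 0 ?_
  rintro _ ⟨τ, rfl⟩
  simpa [hι] using Finset.prod_comp_eq_zero_of_card_lt (w := ζ ∘ ι) (τ⁻¹).injective hI

lemma X_mul_X_mem_grVanishingIdeal (hζ : ∀ t, ζ (Sum.inl t) * ζ (Sum.inr t) = 0) (t : Fin n) :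
    X (Sum.inl t) * X (Sum.inr t) ∈ grVanishingIdeal (orbitOfPoint (Equiv.Perm (Fin n)) ζ) := by
  refine mem_grVanishingIdeal_of_eval_eq
    ((isHomogeneous_X ℂ _).mul (isHomogeneous_X ℂ _)) two_pos 0 ?_
  rintro _ ⟨τ, rfl⟩
  simpa using hζ (τ⁻¹ t)

end Generators

section BasePoint

variable {n : ℕ}

def basePoint (n a m : ℕ) : Fin n ⊕ Fin n → ℂ :=
  Sum.elim (fun k ↦ if (k : ℕ) < a then ((k : ℕ) : ℂ) + 1 else 0)
    (fun k ↦ if a ≤ (k : ℕ) ∧ (k : ℕ) < m then ((k : ℕ) : ℂ) + 1 else 0)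

lemma eq_of_ite_natCast_add_one_eq {P : Prop} [Decidable P] {x y : ℕ}
    (h : (if P then (x : ℂ) + 1 else 0) = (y : ℂ) + 1) : x = y := by
  split_ifs at h
  · exact_mod_cast add_right_cancel h
  · exact absurd h.symm (Nat.cast_add_one_ne_zero y)

lemma mem_fixLT_iff_basePoint {a m : ℕ} (ham : a ≤ m) (τ : Equiv.Perm (Fin n)) :
    τ ∈ fixLT n m ↔ ∀ v, basePoint n a m (τ • v) = basePoint n a m v := by
  constructor
  · intro hτ v
    rcases v with k | k <;> by_cases hk : (k : ℕ) < m
    all_goals simp only [basePoint, Sum.smul_inl, Sum.smul_inr, Equiv.Perm.smul_def,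
      Sum.elim_inl, Sum.elim_inr]
    · rw [hτ k hk]
    · have := (val_apply_lt_iff_of_mem_fixLT hτ k).not.2 hk
      rw [if_neg (by omega), if_neg (by omega)]
    · rw [hτ k hk]
    · have := (val_apply_lt_iff_of_mem_fixLT hτ k).not.2 hk
      rw [if_neg (by omega), if_neg (by omega)]
  · intro h k hk
    by_cases hka : (k : ℕ) < a
    · have hv := h (Sum.inl k)
      simp only [basePoint, Sum.smul_inl, Equiv.Perm.smul_def, Sum.elim_inl, if_pos hka] at hv
      exact Fin.ext (eq_of_ite_natCast_add_one_eq hv)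
    · have hv := h (Sum.inr k)
      simp only [basePoint, Sum.smul_inr, Equiv.Perm.smul_def, Sum.elim_inr,
        if_pos (⟨not_lt.1 hka, hk⟩ : a ≤ (k : ℕ) ∧ (k : ℕ) < m)] at hv
      exact Fin.ext (eq_of_ite_natCast_add_one_eq hv)

lemma card_basePoint_inl_ne_zero_le (a m : ℕ) :
    (Finset.univ.filter fun t ↦ basePoint n a m (Sum.inl t) ≠ 0).card ≤ a :=
  (Fin.card_filter_le_of_val_mem (s := Finset.range a) fun t ht ↦ Finset.mem_range.2 (by
    by_contra h
    simp [basePoint, h] at ht)).trans (Finset.card_range a).le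

lemma card_basePoint_inr_ne_zero_le (a m : ℕ) :
    (Finset.univ.filter fun t ↦ basePoint n a m (Sum.inr t) ≠ 0).card ≤ m - a :=
  (Fin.card_filter_le_of_val_mem (s := Finset.Ico a m) fun t ht ↦ Finset.mem_Ico.2 (by
    by_contra h
    simp [basePoint, h] at ht)).trans (Nat.card_Ico a m).le

lemma basePoint_inl_mul_inr (a m : ℕ) (t : Fin n) :
    basePoint n a m (Sum.inl t) * basePoint n a m (Sum.inr t) = 0 := by
  simp only [basePoint, Sum.elim_inl, Sum.elim_inr]
  split_ifs <;> first | omega | simp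

end BasePoint

section Quotient

variable {n : ℕ}

lemma permB_mkB (σ : Equiv.Perm (Fin n)) (p : MvPolynomial (Fin n ⊕ Fin n) ℂ) :
    permB n σ (mkB n p) = mkB n (rename (σ • ·) p) := rfl

lemma prod_xv_eq_mkB (I : Finset (Fin n)) :
    ∏ t ∈ I, xv n t = mkB n (∏ t ∈ I, X (Sum.inl t)) := by
  simp [xv]

lemma prod_yv_eq_mkB (I : Finset (Fin n)) :
    ∏ t ∈ I, yv n t = mkB n (∏ t ∈ I, X (Sum.inr t)) := by
  simp [yv]

lemma eX_eq_mkB (d : ℕ) : eX n d = mkB n (rename Sum.inl (esymm (Fin n) ℂ d)) := by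
  simp [eX, esymm, prod_xv_eq_mkB]

lemma fY_eq_mkB (d : ℕ) : fY n d = mkB n (rename Sum.inr (esymm (Fin n) ℂ d)) := by
  simp [fY, esymm, prod_yv_eq_mkB]

lemma Bideal_le_grVanishingIdeal (a m : ℕ) :
    Bideal n ≤ grVanishingIdeal (orbitOfPoint (Equiv.Perm (Fin n)) (basePoint n a m)) :=
  Ideal.span_le.2 <| Set.range_subset_iff.2 <|
    X_mul_X_mem_grVanishingIdeal (basePoint_inl_mul_inr a m)

lemma Iij_le_map_grVanishingIdeal {i j : ℕ} (hi : 1 ≤ i) (hj : 1 ≤ j) :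
    Iij n i j ≤ (grVanishingIdeal (orbitOfPoint (Equiv.Perm (Fin n))
      (basePoint n (i - 1) (i + j - 2)))).map (mkB n) := by
  refine Ideal.span_le.2 ?_
  rintro _ (((⟨d, hd, -, rfl⟩ | ⟨I, hI, rfl⟩) | ⟨d, hd, -, rfl⟩) | ⟨I, hI, rfl⟩)
  · rw [eX_eq_mkB]
    exact Ideal.mem_map_of_mem _ (rename_esymm_mem_grVanishingIdeal (fun _ _ ↦ rfl) hd)
  · rw [prod_xv_eq_mkB]
    refine Ideal.mem_map_of_mem _ (prod_X_mem_grVanishingIdeal (fun _ _ ↦ rfl) ?_)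
    have := card_basePoint_inl_ne_zero_le (n := n) (i - 1) (i + j - 2)
    omega
  · rw [fY_eq_mkB]
    exact Ideal.mem_map_of_mem _ (rename_esymm_mem_grVanishingIdeal (fun _ _ ↦ rfl) hd)
  · rw [prod_yv_eq_mkB]
    refine Ideal.mem_map_of_mem _ (prod_X_mem_grVanishingIdeal (fun _ _ ↦ rfl) ?_)
    have := card_basePoint_inr_ne_zero_le (n := n) (i - 1) (i + j - 2)
    omega

lemma mem_grVanishingIdeal_of_mkB_mem_Iij {i j : ℕ} (hi : 1 ≤ i) (hj : 1 ≤ j)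
    {p : MvPolynomial (Fin n ⊕ Fin n) ℂ} (hp : mkB n p ∈ Iij n i j) :
    p ∈ grVanishingIdeal (orbitOfPoint (Equiv.Perm (Fin n)) (basePoint n (i - 1) (i + j - 2))) := by
  obtain ⟨q, hq, hqp⟩ := (Ideal.mem_map_iff_of_surjective _
    (Ideal.Quotient.mkₐ_surjective ℂ _)).1 (Iij_le_map_grVanishingIdeal hi hj hp)
  have hpq : p - q ∈ Bideal n := by
    rw [← Ideal.Quotient.eq]
    simpa [Ideal.Quotient.mkₐ_eq_mk] using hqp.symm
  simpa using Ideal.add_mem _ (Bideal_le_grVanishingIdeal _ _ hpq) hq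

end Quotient

theorem surjection_onto_permutation_module_general (n i j : ℕ) (hi : 1 ≤ i) (hj : 1 ≤ j) :
    ∃ f : (B n ⧸ Iij n i j) →ₗ[ℂ] ((Equiv.Perm (Fin n) ⧸ fixLT n (i + j - 2)) → ℂ),
      Function.Surjective f ∧
      (∀ (σ : Equiv.Perm (Fin n)) (P : B n),
        f (Ideal.Quotient.mk (Iij n i j) (permB n σ P)) =
          cosetAct n (i + j - 2) σ (f (Ideal.Quotient.mk (Iij n i j) P))) ∧
      (↑(n.factorial / (n + 2 - (i + j)).factorial) : Cardinal) ≤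
        Module.rank ℂ (B n ⧸ Iij n i j) := by
  obtain ⟨F, hF_surj, hF_equiv, hF_ker⟩ := exists_equivariant_surjection_of_stabilizer
    (mem_fixLT_iff_basePoint (n := n) (a := i - 1) (m := i + j - 2) (by omega))
  let φ := ((Ideal.Quotient.mkₐ ℂ (Iij n i j)).comp (mkB n)).toLinearMap
  have hφ : Function.Surjective φ :=
    (Ideal.Quotient.mkₐ_surjective ℂ _).comp (Ideal.Quotient.mkₐ_surjective ℂ _)
  obtain ⟨f, hf⟩ := LinearMap.exists_comp_eq_of_ker_le hφ F fun p hp ↦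
    hF_ker p (mem_grVanishingIdeal_of_mkB_mem_Iij hi hj (Ideal.Quotient.eq_zero_iff_mem.1 hp))
  have hf_surj : Function.Surjective f := fun g ↦
    let ⟨p, hp⟩ := hF_surj g
    ⟨φ p, (hf p).trans hp⟩
  refine ⟨f, hf_surj, fun σ P ↦ ?_, ?_⟩
  · obtain ⟨p, rfl⟩ := Ideal.Quotient.mkₐ_surjective ℂ (Bideal n) P
    rw [permB_mkB]
    exact (hf _).trans ((hF_equiv σ p).trans (congrArg _ (hf p).symm))
  · have h := LinearMap.rank_le_of_surjective f hf_surj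
    rwa [rank_fun_quotient_fixLT, show n - (i + j - 2) = n + 2 - (i + j) by omega] at h

/-- For `i, j ≥ 1` with `i + j ≤ n + 1`, there is a surjective
`ℂ[Sₙ]`-module homomorphism from `R^n_{i,j} = Bₙ/I^n_{i,j}` onto the permutation module
`ℂ[Sₙ/S_{n−i−j+2}]`; in particular `dim R^n_{i,j} ≥ n!/(n−i−j+2)!`. -/
theorem surjection_onto_permutation_module (n i j : ℕ) (hi : 1 ≤ i) (hj : 1 ≤ j)
    (hij : i + j ≤ n + 1) :
    ∃ f : (B n ⧸ Iij n i j) →ₗ[ℂ] ((Equiv.Perm (Fin n) ⧸ fixLT n (i + j - 2)) → ℂ),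
      Function.Surjective f ∧
      (∀ (σ : Equiv.Perm (Fin n)) (P : B n),
        f (Ideal.Quotient.mk (Iij n i j) (permB n σ P)) =
          cosetAct n (i + j - 2) σ (f (Ideal.Quotient.mk (Iij n i j) P))) ∧
      (↑(n.factorial / (n + 2 - (i + j)).factorial) : Cardinal) ≤
        Module.rank ℂ (B n ⧸ Iij n i j) :=
  surjection_onto_permutation_module_general n i j hi hj
end
end

section
/- Let i, j ≥ 1 with i + j = n + 1, let 1 ≤ k ≤ i−1 and 1 ≤ k' ≤ j−1, and let 𝒳^{(n−1)}_{i−1} = { x_I : I ⊆ {1,…,n−1}, |I| = i−1 }. Then the following three maps are well-defined surjective homomorphisms of ℂ[S_{n−1}]-modules: φ_0 : R^{n−1}_{i−1,j} → R^n_{i,j}/⟨x_n, y_n, 𝒳^{(n−1)}_{i−1}⟩ sending the class of P to the class of P; φ_k : R^{n−1}_{i−1,j} → ⟨x_n^k, y_n, 𝒳^{(n−1)}_{i−1}⟩/⟨x_n^{k+1}, y_n, 𝒳^{(n−1)}_{i−1}⟩ (ideals in R^n_{i,j}) sending the class of P to the class of x_n^k P; and φ'_{k'} : R^{n−1}_{i,j−1}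 → ⟨y_n^{k'}⟩/⟨y_n^{k'+1}⟩ (ideals in R^n_{i,j}) sending the class of P to the class of y_n^{k'} P. Here P ranges over polynomials in x_1,…,x_{n−1},y_1,…,y_{n−1}, and S_{n−1} ≤ S_n permutes the first n−1 indices. -/
open MvPolynomial

set_option maxHeartbeats 1000000
set_option synthInstance.maxHeartbeats 400000

noncomputable section

/-- the subquotient `K / K'` of two ideals of `B n`, as a `ℂ`-module. -/
abbrev SQ (n : ℕ) (K K' : Ideal (B n)) : Type :=
  ↥(K.restrictScalars ℂ) ⧸
    (Submodule.comap (K.restrictScalars ℂ).subtype (K'.restrictScalars ℂ))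

/-- the class in `K / K'` of an element `p ∈ K`. -/
def sqMk (n : ℕ) (K K' : Ideal (B n)) (p : B n) (hp : p ∈ K) : SQ n K K' :=
  Submodule.Quotient.mk ⟨p, hp⟩

/-- the inclusion `B m → B n` sending `x_t ↦ x_t`, `y_t ↦ y_t`. -/
def inclB (m n : ℕ) (h : m ≤ n) : B m →ₐ[ℂ] B n :=
  Ideal.Quotient.liftₐ (Bideal m)
    ((mkB n).comp (MvPolynomial.rename (Sum.map (Fin.castLE h) (Fin.castLE h))))
    (by
      intro a ha
      have hker : Bideal m ≤ RingHom.ker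
          ((mkB n).comp (MvPolynomial.rename (Sum.map (Fin.castLE h) (Fin.castLE h)))).toRingHom := by
        rw [Ideal.span_le]
        rintro _ ⟨i, rfl⟩
        simp only [SetLike.mem_coe, RingHom.mem_ker, AlgHom.toRingHom_eq_coe, RingHom.coe_coe,
          AlgHom.comp_apply, map_mul, rename_X, Sum.map_inl, Sum.map_inr]
        rw [← map_mul, Ideal.Quotient.mkₐ_eq_mk, Ideal.Quotient.eq_zero_iff_mem]
        exact Ideal.subset_span ⟨Fin.castLE h i, rfl⟩
      exact hker ha)

/-- extension of a permutation of `Fin m` to a permutation of `Fin n`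
(acting as the identity on the extra letters). -/
def extPerm (m n : ℕ) (h : m ≤ n) (σ : Equiv.Perm (Fin m)) : Equiv.Perm (Fin n) :=
  σ.viaFintypeEmbedding ⟨Fin.castLE h, Fin.castLE_injective h⟩

/-- `𝒳^{(n−1)}_{i−1} = { x_I : I ⊆ {1,…,n−1}, |I| = i−1 }` inside `B (m+1)` (here `n = m+1`). -/
def XXset (m i : ℕ) : Set (B (m + 1)) :=
  {p | ∃ I : Finset (Fin m), I.card = i - 1 ∧ p = ∏ t ∈ I, xv (m + 1) t.castSucc}

/-- the ideal of `B (m+1)` corresponding to the ideal `⟨xₙ^k, yₙ, 𝒳^{(n−1)}_{i−1}⟩` of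
`R^n_{i,j}` (with `n = m+1`). -/
def LkIdeal (m i j k : ℕ) : Ideal (B (m + 1)) :=
  Iij (m + 1) i j ⊔
    Ideal.span ({xv (m + 1) (Fin.last m) ^ k, yv (m + 1) (Fin.last m)} ∪ XXset m i)

/-- the ideal of `B (m+1)` corresponding to the ideal `⟨xₙ, yₙ, 𝒳^{(n−1)}_{i−1}⟩` of
`R^n_{i,j}` (with `n = m+1`). -/
def L0Ideal (m i j : ℕ) : Ideal (B (m + 1)) :=
  Iij (m + 1) i j ⊔
    Ideal.span ({xv (m + 1) (Fin.last m), yv (m + 1) (Fin.last m)} ∪ XXset m i)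

/-- the ideal of `B (m+1)` corresponding to the ideal `⟨yₙ^{k'}⟩` of `R^n_{i,j}`. -/
def MyIdeal (m i j k' : ℕ) : Ideal (B (m + 1)) :=
  Iij (m + 1) i j ⊔ Ideal.span {yv (m + 1) (Fin.last m) ^ k'}

/-!
With `n = m + 1`, write `ι : B m → B n` for the inclusion and `xₙ, yₙ` for the last variables,
so that `xₙ yₙ = 0`.

Well-definedness: `e_q = ι e_q + xₙ ι e_{q-1}` and `f_q = ι f_q + yₙ ι f_{q-1}`, so modulo
`⟨xₙ, yₙ, 𝒳⟩` every generator of `I^{n-1}_{i-1,j}` lands in `I^n_{i,j}`; multiplication by `xₙ^k`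
maps `⟨xₙ, yₙ, 𝒳⟩` into `⟨xₙ^{k+1}, yₙ, 𝒳⟩`, so `φ_k` is `φ₀` followed by `xₙ^k`. For `φ'_{k'}`,
`yₙ xₙ = 0` kills the correction term of `e_q`, and `yₙ^{k'} y_J = yₙ^{k'-1} y_{J ∪ {n}}` with
`|J ∪ {n}| = j`.

Surjectivity: every element of `B n` is `ι P + a xₙ + b yₙ`, hence `r xₙ^k ≡ xₙ^k ι P` modulo
`xₙ^{k+1}` as soon as `k ≥ 1` (and likewise for `yₙ`).

Equivariance: `S_{n-1}` fixes `xₙ, yₙ`, commutes with `ι` and preserves every ideal involved.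
-/

theorem Multiset.esymm_cons_succ {R : Type*} [CommSemiring R] (a : R) (s : Multiset R) (q : ℕ) :
    (a ::ₘ s).esymm (q + 1) = s.esymm (q + 1) + a * s.esymm q := by
  simp only [Multiset.esymm, Multiset.powersetCard_cons, Multiset.map_add, Multiset.sum_add,
    Multiset.map_map, Function.comp_def, Multiset.prod_cons, Multiset.sum_map_mul_left]

theorem Fin.sum_powersetCard_succ_prod {R : Type*} [CommSemiring R] {m : ℕ} (f : Fin (m + 1) → R)
    (q : ℕ) :
    ∑ S ∈ Finset.powersetCard (q + 1) Finset.univ, ∏ t ∈ S, f t =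
      ∑ S ∈ Finset.powersetCard (q + 1) Finset.univ, ∏ t ∈ S, f (Fin.castSucc t) +
        f (Fin.last m) * ∑ S ∈ Finset.powersetCard q Finset.univ, ∏ t ∈ S, f (Fin.castSucc t) := by
  rw [← Finset.esymm_map_val, ← Finset.esymm_map_val, ← Finset.esymm_map_val, Fin.univ_castSuccEmb,
    Finset.cons_val, Multiset.map_cons, Finset.map_val, Multiset.map_map]
  exact Multiset.esymm_cons_succ _ _ q

theorem Finset.sum_powersetCard_prod_perm {ι R : Type*} [Fintype ι] [CommSemiring R]
    (σ : Equiv.Perm ι) (f : ι → R) (q : ℕ) :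
    ∑ S ∈ powersetCard q univ, ∏ t ∈ S, f (σ t) = ∑ S ∈ powersetCard q univ, ∏ t ∈ S, f t := by
  rw [← esymm_map_val, ← esymm_map_val, ← Function.comp_def f σ, ← Multiset.map_map,
    Multiset.map_univ_val_equiv]

theorem Ideal.map_span_le_of_mapsTo {R F : Type*} [Semiring R] [FunLike F R R] [RingHomClass F R R]
    (f : F) {S : Set R} (h : Set.MapsTo f S S) : (Ideal.span S).map f ≤ Ideal.span S := by
  rw [Ideal.map_span]
  exact Ideal.span_mono h.image_subset

theorem Ideal.Quotient.mk_map_eq_of_mk_eq {R F : Type*} [CommRing R] [FunLike F R R]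
    [RingHomClass F R R] {K : Ideal R} (τ : F) (hK : K.map τ ≤ K) {a b : R}
    (h : Ideal.Quotient.mk K a = Ideal.Quotient.mk K b) :
    Ideal.Quotient.mk K (τ a) = Ideal.Quotient.mk K (τ b) := by
  rw [Ideal.Quotient.eq, ← map_sub] at *
  exact hK (Ideal.mem_map_of_mem τ h)

theorem Ideal.exists_sub_mul_mem_of_le_sup_span {R A : Type*} [CommRing R] {K K' : Ideal R} {c : R}
    (f : A → R) (hK : K ≤ K' ⊔ Ideal.span {c}) (hc : ∀ r, ∃ a, r * c - c * f a ∈ K') {p : R}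
    (hp : p ∈ K) : ∃ a, p - c * f a ∈ K' := by
  obtain ⟨u, hu, v, hv, rfl⟩ := Submodule.mem_sup.1 (hK hp)
  obtain ⟨r, rfl⟩ := Ideal.mem_span_singleton'.1 hv
  obtain ⟨a, ha⟩ := hc r
  exact ⟨a, by simpa only [add_sub_assoc] using K'.add_mem hu ha⟩

section

variable {n m i j : ℕ}

theorem xv_mul_yv (t : Fin n) : xv n t * yv n t = 0 := by
  rw [xv, yv, ← map_mul, Ideal.Quotient.mkₐ_eq_mk, Ideal.Quotient.eq_zero_iff_mem]
  exact Ideal.subset_span ⟨t, rfl⟩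

theorem xv_mul_yv_pow (t : Fin n) {k : ℕ} (hk : 1 ≤ k) : xv n t * yv n t ^ k = 0 := by
  obtain ⟨k, rfl⟩ := Nat.exists_eq_add_of_le' hk
  rw [pow_succ', ← mul_assoc, xv_mul_yv, zero_mul]

theorem yv_mul_xv_pow (t : Fin n) {k : ℕ} (hk : 1 ≤ k) : yv n t * xv n t ^ k = 0 := by
  obtain ⟨k, rfl⟩ := Nat.exists_eq_add_of_le' hk
  rw [pow_succ', ← mul_assoc, mul_comm (yv n t), xv_mul_yv, zero_mul]

theorem permB_xv (σ : Equiv.Perm (Fin n)) (t : Fin n) : permB n σ (xv n t) = xv n (σ t) :=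
  congrArg (mkB n) (rename_X _ _)

theorem permB_yv (σ : Equiv.Perm (Fin n)) (t : Fin n) : permB n σ (yv n t) = yv n (σ t) :=
  congrArg (mkB n) (rename_X _ _)

theorem inclB_xv (t : Fin m) : inclB m (m + 1) (Nat.le_succ m) (xv m t) = xv (m + 1) t.castSucc :=
  congrArg (mkB (m + 1)) (rename_X _ _)

theorem inclB_yv (t : Fin m) : inclB m (m + 1) (Nat.le_succ m) (yv m t) = yv (m + 1) t.castSucc :=
  congrArg (mkB (m + 1)) (rename_X _ _)

theorem extPerm_castSucc (σ : Equiv.Perm (Fin m)) (t : Fin m) :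
    extPerm m (m + 1) (Nat.le_succ m) σ t.castSucc = (σ t).castSucc :=
  σ.viaFintypeEmbedding_apply_image
    (⟨Fin.castLE (Nat.le_succ m), Fin.castLE_injective _⟩ : Fin m ↪ Fin (m + 1)) t

theorem extPerm_last (σ : Equiv.Perm (Fin m)) :
    extPerm m (m + 1) (Nat.le_succ m) σ (Fin.last m) = Fin.last m := by
  refine σ.viaFintypeEmbedding_apply_notMem_range
    (⟨Fin.castLE (Nat.le_succ m), Fin.castLE_injective _⟩ : Fin m ↪ Fin (m + 1)) ?_
  rintro ⟨t, ht⟩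
  exact (Fin.castSucc_lt_last t).ne ht

theorem permB_inclB (σ : Equiv.Perm (Fin m)) (P : B m) :
    permB (m + 1) (extPerm m (m + 1) (Nat.le_succ m) σ) (inclB m (m + 1) (Nat.le_succ m) P) =
      inclB m (m + 1) (Nat.le_succ m) (permB m σ P) := by
  suffices h : (permB (m + 1) (extPerm m (m + 1) (Nat.le_succ m) σ)).comp
      (inclB m (m + 1) (Nat.le_succ m)) = (inclB m (m + 1) (Nat.le_succ m)).comp (permB m σ) from
    AlgHom.congr_fun h P
  apply Ideal.Quotient.algHom_ext
  apply MvPolynomial.algHom_ext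
  rintro (t | t)
  · change permB (m + 1) _ (inclB m (m + 1) _ (xv m t)) = inclB m (m + 1) _ (permB m σ (xv m t))
    rw [inclB_xv, permB_xv, permB_xv, inclB_xv, extPerm_castSucc]
  · change permB (m + 1) _ (inclB m (m + 1) _ (yv m t)) = inclB m (m + 1) _ (permB m σ (yv m t))
    rw [inclB_yv, permB_yv, permB_yv, inclB_yv, extPerm_castSucc]

theorem permB_eX (σ : Equiv.Perm (Fin n)) (q : ℕ) : permB n σ (eX n q) = eX n q := by
  simp only [eX, map_sum, map_prod, permB_xv]
  exact Finset.sum_powersetCard_prod_perm σ (xv n) q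

theorem permB_fY (σ : Equiv.Perm (Fin n)) (q : ℕ) : permB n σ (fY n q) = fY n q := by
  simp only [fY, map_sum, map_prod, permB_yv]
  exact Finset.sum_powersetCard_prod_perm σ (yv n) q

theorem eX_succ (m q : ℕ) :
    eX (m + 1) (q + 1) = inclB m (m + 1) (Nat.le_succ m) (eX m (q + 1)) +
      xv (m + 1) (Fin.last m) * inclB m (m + 1) (Nat.le_succ m) (eX m q) := by
  simp only [eX, map_sum, map_prod, inclB_xv]
  exact Fin.sum_powersetCard_succ_prod (xv (m + 1)) q

theorem fY_succ (m q : ℕ) :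
    fY (m + 1) (q + 1) = inclB m (m + 1) (Nat.le_succ m) (fY m (q + 1)) +
      yv (m + 1) (Fin.last m) * inclB m (m + 1) (Nat.le_succ m) (fY m q) := by
  simp only [fY, map_sum, map_prod, inclB_yv]
  exact Fin.sum_powersetCard_succ_prod (yv (m + 1)) q

theorem permB_prod_xv (σ : Equiv.Perm (Fin n)) (I : Finset (Fin n)) :
    permB n σ (∏ t ∈ I, xv n t) = ∏ t ∈ I.map σ.toEmbedding, xv n t := by
  simp [permB_xv]

theorem permB_prod_yv (σ : Equiv.Perm (Fin n)) (J : Finset (Fin n)) :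
    permB n σ (∏ t ∈ J, yv n t) = ∏ t ∈ J.map σ.toEmbedding, yv n t := by
  simp [permB_yv]

theorem inclB_prod_xv (I : Finset (Fin m)) :
    inclB m (m + 1) (Nat.le_succ m) (∏ t ∈ I, xv m t) =
      ∏ t ∈ I.map Fin.castSuccEmb, xv (m + 1) t := by
  simp [inclB_xv]

theorem inclB_prod_yv (J : Finset (Fin m)) :
    inclB m (m + 1) (Nat.le_succ m) (∏ t ∈ J, yv m t) =
      ∏ t ∈ J.map Fin.castSuccEmb, yv (m + 1) t := by
  simp [inclB_yv]

theorem eX_mem_Iij {q : ℕ} (h1 : 1 ≤ q) (h2 : q < i) : eX n q ∈ Iij n i j :=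
  Ideal.subset_span (Or.inl (Or.inl (Or.inl ⟨q, h1, h2, rfl⟩)))

theorem prod_xv_mem_Iij {I : Finset (Fin n)} (hI : I.card = i) : ∏ t ∈ I, xv n t ∈ Iij n i j :=
  Ideal.subset_span (Or.inl (Or.inl (Or.inr ⟨I, hI, rfl⟩)))

theorem fY_mem_Iij {q : ℕ} (h1 : 1 ≤ q) (h2 : q < j) : fY n q ∈ Iij n i j :=
  Ideal.subset_span (Or.inl (Or.inr ⟨q, h1, h2, rfl⟩))

theorem prod_yv_mem_Iij {J : Finset (Fin n)} (hJ : J.card = j) : ∏ t ∈ J, yv n t ∈ Iij n i j :=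
  Ideal.subset_span (Or.inr ⟨J, hJ, rfl⟩)

theorem Iij_le_of_mem {K : Ideal (B n)} (he : ∀ q, 1 ≤ q → q < i → eX n q ∈ K)
    (hx : ∀ I : Finset (Fin n), I.card = i → ∏ t ∈ I, xv n t ∈ K)
    (hf : ∀ q, 1 ≤ q → q < j → fY n q ∈ K)
    (hy : ∀ J : Finset (Fin n), J.card = j → ∏ t ∈ J, yv n t ∈ K) : Iij n i j ≤ K := by
  rw [Iij, Ideal.span_le]
  rintro _ (((⟨q, h1, h2, rfl⟩ | ⟨I, hI, rfl⟩) | ⟨q, h1, h2, rfl⟩) | ⟨J, hJ, rfl⟩)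
  exacts [he q h1 h2, hx I hI, hf q h1 h2, hy J hJ]

theorem map_permB_Iij_le (σ : Equiv.Perm (Fin n)) : (Iij n i j).map (permB n σ) ≤ Iij n i j := by
  rw [Ideal.map_le_iff_le_comap]
  apply Iij_le_of_mem
  · intro q h1 h2
    rw [Ideal.mem_comap, permB_eX]
    exact eX_mem_Iij h1 h2
  · intro I hI
    rw [Ideal.mem_comap, permB_prod_xv]
    exact prod_xv_mem_Iij (by rwa [Finset.card_map])
  · intro q h1 h2
    rw [Ideal.mem_comap, permB_fY]
    exact fY_mem_Iij h1 h2
  · intro J hJ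
    rw [Ideal.mem_comap, permB_prod_yv]
    exact prod_yv_mem_Iij (by rwa [Finset.card_map])

theorem map_permB_Iij_sup_span_le (σ : Equiv.Perm (Fin n)) {T : Set (B n)}
    (hT : Set.MapsTo (permB n σ) T T) :
    (Iij n i j ⊔ Ideal.span T).map (permB n σ) ≤ Iij n i j ⊔ Ideal.span T := by
  rw [Ideal.map_sup]
  exact sup_le_sup (map_permB_Iij_le σ) (Ideal.map_span_le_of_mapsTo _ hT)

theorem permB_extPerm_xv_last (σ : Equiv.Perm (Fin m)) :
    permB (m + 1) (extPerm m (m + 1) (Nat.le_succ m) σ) (xv (m + 1) (Fin.last m)) =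
      xv (m + 1) (Fin.last m) := by
  rw [permB_xv, extPerm_last]

theorem permB_extPerm_yv_last (σ : Equiv.Perm (Fin m)) :
    permB (m + 1) (extPerm m (m + 1) (Nat.le_succ m) σ) (yv (m + 1) (Fin.last m)) =
      yv (m + 1) (Fin.last m) := by
  rw [permB_yv, extPerm_last]

theorem mapsTo_permB_extPerm_XXset (σ : Equiv.Perm (Fin m)) :
    Set.MapsTo (permB (m + 1) (extPerm m (m + 1) (Nat.le_succ m) σ)) (XXset m i) (XXset m i) := by
  rintro _ ⟨I, hI, rfl⟩
  refine ⟨I.map σ.toEmbedding, by rwa [Finset.card_map], ?_⟩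
  simp [permB_xv, extPerm_castSucc]

theorem map_extPerm_LkIdeal_le (σ : Equiv.Perm (Fin m)) (k : ℕ) :
    (LkIdeal m i j k).map (permB (m + 1) (extPerm m (m + 1) (Nat.le_succ m) σ)) ≤
      LkIdeal m i j k := by
  refine map_permB_Iij_sup_span_le _ (Set.MapsTo.union_union ?_ (mapsTo_permB_extPerm_XXset σ))
  rintro _ (rfl | rfl)
  · rw [map_pow, permB_extPerm_xv_last]; exact .inl rfl
  · rw [permB_extPerm_yv_last]; exact .inr rfl

theorem map_extPerm_MyIdeal_le (σ : Equiv.Perm (Fin m)) (k : ℕ) :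
    (MyIdeal m i j k).map (permB (m + 1) (extPerm m (m + 1) (Nat.le_succ m) σ)) ≤
      MyIdeal m i j k := by
  refine map_permB_Iij_sup_span_le _ ?_
  rintro _ rfl
  rw [map_pow, permB_extPerm_yv_last]; rfl

theorem map_extPerm_L0Ideal_le (σ : Equiv.Perm (Fin m)) :
    (L0Ideal m i j).map (permB (m + 1) (extPerm m (m + 1) (Nat.le_succ m) σ)) ≤ L0Ideal m i j := by
  simpa only [L0Ideal, LkIdeal, pow_one] using map_extPerm_LkIdeal_le (i := i) (j := j) σ 1

theorem xv_last_pow_mem_LkIdeal (k : ℕ) : xv (m + 1) (Fin.last m) ^ k ∈ LkIdeal m i j k :=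
  Ideal.mem_sup_right (Ideal.subset_span (.inl (.inl rfl)))

theorem yv_last_pow_mem_MyIdeal (k : ℕ) : yv (m + 1) (Fin.last m) ^ k ∈ MyIdeal m i j k :=
  Ideal.mem_sup_right (Ideal.mem_span_singleton_self _)

theorem xv_last_mem_L0Ideal : xv (m + 1) (Fin.last m) ∈ L0Ideal m i j :=
  Ideal.mem_sup_right (Ideal.subset_span (.inl (.inl rfl)))

theorem yv_last_mem_L0Ideal : yv (m + 1) (Fin.last m) ∈ L0Ideal m i j :=
  Ideal.mem_sup_right (Ideal.subset_span (.inl (.inr rfl)))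

theorem Iij_le_comap_L0Ideal (m i j : ℕ) :
    Iij m (i - 1) j ≤ (L0Ideal m i j).comap (inclB m (m + 1) (Nat.le_succ m)) := by
  apply Iij_le_of_mem <;> simp only [Ideal.mem_comap]
  · rintro (_ | s) h1 h2
    · omega
    rw [eq_sub_of_add_eq (eX_succ m s).symm]
    exact sub_mem (Ideal.mem_sup_left (eX_mem_Iij h1 (by omega)))
      (Ideal.mul_mem_right _ _ xv_last_mem_L0Ideal)
  · intro I hI
    rw [inclB_prod_xv, Finset.prod_map]
    exact Ideal.mem_sup_right (Ideal.subset_span (.inr ⟨I, hI, rfl⟩))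
  · rintro (_ | s) h1 h2
    · omega
    rw [eq_sub_of_add_eq (fY_succ m s).symm]
    exact sub_mem (Ideal.mem_sup_left (fY_mem_Iij h1 h2))
      (Ideal.mul_mem_right _ _ yv_last_mem_L0Ideal)
  · intro J hJ
    rw [inclB_prod_yv]
    exact Ideal.mem_sup_left (prod_yv_mem_Iij (by rwa [Finset.card_map]))

theorem L0Ideal_le_colon_LkIdeal (k : ℕ) :
    L0Ideal m i j ≤ (LkIdeal m i j (k + 1)).colon {xv (m + 1) (Fin.last m) ^ k} := by
  refine sup_le (le_sup_left.trans Ideal.le_colon) (Ideal.span_le.2 ?_)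
  rintro _ ((rfl | rfl) | hX) <;> rw [SetLike.mem_coe, Submodule.mem_colon_singleton, smul_eq_mul]
  · rw [← pow_succ']
    exact xv_last_pow_mem_LkIdeal (k + 1)
  · exact Ideal.mul_mem_right _ _ (Ideal.mem_sup_right (Ideal.subset_span (.inl (.inr rfl))))
  · exact Ideal.mul_mem_right _ _ (Ideal.mem_sup_right (Ideal.subset_span (.inr hX)))

theorem Iij_le_comap_colon_LkIdeal (k : ℕ) :
    Iij m (i - 1) j ≤ ((LkIdeal m i j (k + 1)).colon {xv (m + 1) (Fin.last m) ^ k}).comap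
      (inclB m (m + 1) (Nat.le_succ m)) :=
  (Iij_le_comap_L0Ideal m i j).trans (Ideal.comap_mono (L0Ideal_le_colon_LkIdeal k))

theorem Iij_le_comap_colon_MyIdeal (hj : 1 ≤ j) {k : ℕ} (hk : 1 ≤ k) :
    Iij m i (j - 1) ≤ ((MyIdeal m i j (k + 1)).colon {yv (m + 1) (Fin.last m) ^ k}).comap
      (inclB m (m + 1) (Nat.le_succ m)) := by
  apply Iij_le_of_mem <;> simp only [Ideal.mem_comap, Submodule.mem_colon_singleton, smul_eq_mul]
  · rintro (_ | s) h1 h2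
    · omega
    rw [eq_sub_of_add_eq (eX_succ m s).symm, sub_mul, mul_right_comm (xv _ _),
      xv_mul_yv_pow _ hk, zero_mul, sub_zero]
    exact Ideal.mem_sup_left (Ideal.mul_mem_right _ _ (eX_mem_Iij h1 h2))
  · intro I hI
    rw [inclB_prod_xv]
    exact Ideal.mem_sup_left (Ideal.mul_mem_right _ _ (prod_xv_mem_Iij (by rwa [Finset.card_map])))
  · rintro (_ | s) h1 h2
    · omega
    rw [eq_sub_of_add_eq (fY_succ m s).symm, sub_mul]
    refine sub_mem (Ideal.mem_sup_left (Ideal.mul_mem_right _ _ (fY_mem_Iij h1 (by omega)))) ?_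
    rw [mul_comm, ← mul_assoc, ← pow_succ]
    exact Ideal.mul_mem_right _ _ (yv_last_pow_mem_MyIdeal (k + 1))
  · intro J hJ
    obtain ⟨k, rfl⟩ := Nat.exists_eq_add_of_le' hk
    have hlast : Fin.last m ∉ J.map Fin.castSuccEmb := by simp
    rw [inclB_prod_yv, pow_succ, mul_comm, mul_assoc, ← Finset.prod_cons hlast]
    refine Ideal.mem_sup_left (Ideal.mul_mem_left _ _ (prod_yv_mem_Iij ?_))
    rw [Finset.card_cons, Finset.card_map, hJ]
    omega

theorem surjective_mkₐ_comp_inclB {K : Ideal (B (m + 1))} (hx : xv (m + 1) (Fin.last m) ∈ K)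
    (hy : yv (m + 1) (Fin.last m) ∈ K) :
    Function.Surjective ((Ideal.Quotient.mkₐ ℂ K).comp (inclB m (m + 1) (Nat.le_succ m))) := by
  set h := (Ideal.Quotient.mkₐ ℂ K).comp (mkB (m + 1))
  have hh : Function.Surjective h :=
    (Ideal.Quotient.mkₐ_surjective ℂ K).comp (Ideal.Quotient.mkₐ_surjective ℂ _)
  rw [← AlgHom.range_eq_top, eq_top_iff, ← (AlgHom.range_eq_top h).2 hh, ← Algebra.map_top,
    ← MvPolynomial.adjoin_range_X, AlgHom.map_adjoin, Algebra.adjoin_le_iff]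
  rintro _ ⟨_, ⟨(t | t), rfl⟩, rfl⟩ <;> induction t using Fin.lastCases
  case inl.last => exact ⟨0, (map_zero _).trans (Ideal.Quotient.eq_zero_iff_mem.2 hx).symm⟩
  case inr.last => exact ⟨0, (map_zero _).trans (Ideal.Quotient.eq_zero_iff_mem.2 hy).symm⟩
  case inl.cast s => exact ⟨xv m s, congrArg (Ideal.Quotient.mkₐ ℂ K) (inclB_xv s)⟩
  case inr.cast s => exact ⟨yv m s, congrArg (Ideal.Quotient.mkₐ ℂ K) (inclB_yv s)⟩

theorem exists_eq_inclB_add (Q : B (m + 1)) :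
    ∃ P a b, Q = inclB m (m + 1) (Nat.le_succ m) P + a * xv (m + 1) (Fin.last m) +
      b * yv (m + 1) (Fin.last m) := by
  obtain ⟨P, hP⟩ := surjective_mkₐ_comp_inclB
    (K := Ideal.span {xv (m + 1) (Fin.last m), yv (m + 1) (Fin.last m)})
    (Ideal.subset_span (Set.mem_insert _ _)) (Ideal.subset_span (Set.mem_insert_of_mem _ rfl))
    (Ideal.Quotient.mkₐ ℂ _ Q)
  obtain ⟨a, b, hab⟩ := Ideal.mem_span_pair.1 (Ideal.Quotient.eq.1 hP.symm)
  exact ⟨P, a, b, (eq_add_of_sub_eq' hab.symm).trans (add_assoc _ _ _).symm⟩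

theorem exists_mul_xv_last_pow_sub_mem {k : ℕ} (hk : 1 ≤ k) {K : Ideal (B (m + 1))}
    (hK : xv (m + 1) (Fin.last m) ^ (k + 1) ∈ K) (r : B (m + 1)) :
    ∃ P, r * xv (m + 1) (Fin.last m) ^ k -
      xv (m + 1) (Fin.last m) ^ k * inclB m (m + 1) (Nat.le_succ m) P ∈ K := by
  obtain ⟨P, a, b, rfl⟩ := exists_eq_inclB_add r
  refine ⟨P, ?_⟩
  convert K.mul_mem_left a hK using 1
  linear_combination b * yv_mul_xv_pow (Fin.last m) hk

theorem exists_mul_yv_last_pow_sub_mem {k : ℕ} (hk : 1 ≤ k) {K : Ideal (B (m + 1))}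
    (hK : yv (m + 1) (Fin.last m) ^ (k + 1) ∈ K) (r : B (m + 1)) :
    ∃ P, r * yv (m + 1) (Fin.last m) ^ k -
      yv (m + 1) (Fin.last m) ^ k * inclB m (m + 1) (Nat.le_succ m) P ∈ K := by
  obtain ⟨P, a, b, rfl⟩ := exists_eq_inclB_add r
  refine ⟨P, ?_⟩
  convert K.mul_mem_left b hK using 1
  linear_combination a * xv_mul_yv_pow (Fin.last m) hk

theorem exists_sub_xv_last_pow_mul_inclB_mem {k : ℕ} (hk : 1 ≤ k) {p : B (m + 1)}
    (hp : p ∈ LkIdeal m i j k) :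
    ∃ P, p - xv (m + 1) (Fin.last m) ^ k * inclB m (m + 1) (Nat.le_succ m) P ∈
      LkIdeal m i j (k + 1) := by
  have hle :
      LkIdeal m i j k ≤ LkIdeal m i j (k + 1) ⊔ Ideal.span {xv (m + 1) (Fin.last m) ^ k} := by
    refine sup_le (le_sup_left.trans le_sup_left) (Ideal.span_le.2 ?_)
    rintro _ ((rfl | rfl) | hX)
    · exact Ideal.mem_sup_right (Ideal.mem_span_singleton_self _)
    · exact Ideal.mem_sup_left (Ideal.mem_sup_right (Ideal.subset_span (.inl (.inr rfl))))
    · exact Ideal.mem_sup_left (Ideal.mem_sup_right (Ideal.subset_span (.inr hX)))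
  exact Ideal.exists_sub_mul_mem_of_le_sup_span _ hle
    (exists_mul_xv_last_pow_sub_mem hk (xv_last_pow_mem_LkIdeal (k + 1))) hp

theorem exists_sub_yv_last_pow_mul_inclB_mem {k : ℕ} (hk : 1 ≤ k) {p : B (m + 1)}
    (hp : p ∈ MyIdeal m i j k) :
    ∃ P, p - yv (m + 1) (Fin.last m) ^ k * inclB m (m + 1) (Nat.le_succ m) P ∈
      MyIdeal m i j (k + 1) :=
  Ideal.exists_sub_mul_mem_of_le_sup_span _ (sup_le (le_sup_left.trans le_sup_left) le_sup_right)
    (exists_mul_yv_last_pow_sub_mem hk (yv_last_pow_mem_MyIdeal (k + 1))) hp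

end

section Subquotient

variable {A : Type*} [CommRing A] [Algebra ℂ A] {n : ℕ} {I : Ideal A} {K K' : Ideal (B n)}

theorem sqMk_eq_sqMk_iff {a b : B n} (ha : a ∈ K) (hb : b ∈ K) :
    sqMk n K K' a ha = sqMk n K K' b hb ↔ a - b ∈ K' :=
  Submodule.Quotient.eq _

def mulSQ (f : A →ₐ[ℂ] B n) {c : B n} (hc : c ∈ K) (hI : I ≤ (K'.colon {c}).comap f) :
    (A ⧸ I) →ₗ[ℂ] SQ n K K' :=
  (Submodule.liftQ (I.restrictScalars ℂ)
    ((Submodule.mkQ _).comp (LinearMap.codRestrict (K.restrictScalars ℂ)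
      ((LinearMap.mulLeft ℂ c).comp f.toLinearMap) fun a => K.mul_mem_right (f a) hc))
    fun a ha => (Submodule.Quotient.mk_eq_zero _).2 (by
      change c * f a ∈ K'
      rw [mul_comm, ← smul_eq_mul, ← Submodule.mem_colon_singleton]
      exact hI ha)).comp
  (Submodule.Quotient.restrictScalarsEquiv ℂ I).symm.toLinearMap

variable (f : A →ₐ[ℂ] B n) {c : B n} (hc : c ∈ K) (hI : I ≤ (K'.colon {c}).comap f)

theorem mulSQ_mk (a : A) :
    mulSQ f hc hI (Ideal.Quotient.mk I a) = sqMk n K K' (c * f a) (K.mul_mem_right _ hc) :=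
  rfl

theorem mulSQ_surjective (h : ∀ p ∈ K, ∃ a, p - c * f a ∈ K') :
    Function.Surjective (mulSQ f hc hI) := by
  intro q
  obtain ⟨⟨p, hp⟩, rfl⟩ := Submodule.Quotient.mk_surjective _ q
  obtain ⟨a, ha⟩ := h p hp
  refine ⟨Ideal.Quotient.mk I a, (sqMk_eq_sqMk_iff _ hp).2 ?_⟩
  rw [← neg_sub]
  exact K'.neg_mem ha

theorem mulSQ_mk_map_eq (σ : A →ₐ[ℂ] A) (τ : B n →ₐ[ℂ] B n) (hτf : ∀ a, τ (f a) = f (σ a))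
    (hτc : τ c = c) (hK' : K'.map τ ≤ K') {a : A} {p : B n} (hp : p ∈ K) (hq : τ p ∈ K)
    (h : mulSQ f hc hI (Ideal.Quotient.mk I a) = sqMk n K K' p hp) :
    mulSQ f hc hI (Ideal.Quotient.mk I (σ a)) = sqMk n K K' (τ p) hq := by
  rw [mulSQ_mk, sqMk_eq_sqMk_iff] at h ⊢
  rw [← hτf, ← hτc, ← map_mul, ← map_sub]
  exact hK' (Ideal.mem_map_of_mem τ h)

end Subquotient

/-- (Here `n = m + 1`, so `i + j = n + 1` reads `i + j = m + 2`.)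
For `i, j ≥ 1` with `i + j = n + 1`, `1 ≤ k ≤ i−1` and `1 ≤ k' ≤ j−1`, the three maps
`φ₀ : R^{n−1}_{i−1,j} → R^n_{i,j}/⟨xₙ, yₙ, 𝒳^{(n−1)}_{i−1}⟩`, `P ↦ P`,
`φ_k : R^{n−1}_{i−1,j} → ⟨xₙ^k, yₙ, 𝒳⟩/⟨xₙ^{k+1}, yₙ, 𝒳⟩`, `P ↦ xₙ^k P`, and
`φ'_{k'} : R^{n−1}_{i,j−1} → ⟨yₙ^{k'}⟩/⟨yₙ^{k'+1}⟩`, `P ↦ yₙ^{k'} P`,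
are well-defined surjective homomorphisms of `ℂ[S_{n−1}]`-modules
(equivariance is expressed on representatives, with `S_{n−1} ≤ Sₙ` permuting the
first `n−1` letters). -/
theorem recursive_surjections_extreme_case (m i j k k' : ℕ) (hj : 1 ≤ j)
    (hk1 : 1 ≤ k) (hk'1 : 1 ≤ k') :
    (∃ φ : (B m ⧸ Iij m (i - 1) j) →ₗ[ℂ] (B (m + 1) ⧸ L0Ideal m i j),
      (∀ P : B m, φ (Ideal.Quotient.mk (Iij m (i - 1) j) P) =
        Ideal.Quotient.mk (L0Ideal m i j) (inclB m (m + 1) (Nat.le_succ m) P)) ∧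
      Function.Surjective φ ∧
      (∀ (σ : Equiv.Perm (Fin m)) (P : B m) (Q : B (m + 1)),
        φ (Ideal.Quotient.mk (Iij m (i - 1) j) P) = Ideal.Quotient.mk (L0Ideal m i j) Q →
        φ (Ideal.Quotient.mk (Iij m (i - 1) j) (permB m σ P)) =
          Ideal.Quotient.mk (L0Ideal m i j) (permB (m + 1) (extPerm m (m + 1) (Nat.le_succ m) σ) Q))) ∧
    (∃ φ : (B m ⧸ Iij m (i - 1) j) →ₗ[ℂ] SQ (m + 1) (LkIdeal m i j k) (LkIdeal m i j (k + 1)),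
      (∀ P : B m, φ (Ideal.Quotient.mk (Iij m (i - 1) j) P) =
        sqMk (m + 1) (LkIdeal m i j k) (LkIdeal m i j (k + 1))
          (xv (m + 1) (Fin.last m) ^ k * inclB m (m + 1) (Nat.le_succ m) P)
          (Ideal.mul_mem_right _ _ (Ideal.mem_sup_right (Ideal.subset_span (by simp))))) ∧
      Function.Surjective φ ∧
      (∀ (σ : Equiv.Perm (Fin m)) (P : B m) (p : B (m + 1)) (hp : p ∈ LkIdeal m i j k)
        (hq : permB (m + 1) (extPerm m (m + 1) (Nat.le_succ m) σ) p ∈ LkIdeal m i j k),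
        φ (Ideal.Quotient.mk (Iij m (i - 1) j) P) =
          sqMk (m + 1) (LkIdeal m i j k) (LkIdeal m i j (k + 1)) p hp →
        φ (Ideal.Quotient.mk (Iij m (i - 1) j) (permB m σ P)) =
          sqMk (m + 1) (LkIdeal m i j k) (LkIdeal m i j (k + 1))
            (permB (m + 1) (extPerm m (m + 1) (Nat.le_succ m) σ) p) hq)) ∧
    (∃ φ : (B m ⧸ Iij m i (j - 1)) →ₗ[ℂ] SQ (m + 1) (MyIdeal m i j k') (MyIdeal m i j (k' + 1)),
      (∀ P : B m, φ (Ideal.Quotient.mk (Iij m i (j - 1)) P) =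
        sqMk (m + 1) (MyIdeal m i j k') (MyIdeal m i j (k' + 1))
          (yv (m + 1) (Fin.last m) ^ k' * inclB m (m + 1) (Nat.le_succ m) P)
          (Ideal.mul_mem_right _ _ (Ideal.mem_sup_right (Ideal.subset_span rfl)))) ∧
      Function.Surjective φ ∧
      (∀ (σ : Equiv.Perm (Fin m)) (P : B m) (p : B (m + 1)) (hp : p ∈ MyIdeal m i j k')
        (hq : permB (m + 1) (extPerm m (m + 1) (Nat.le_succ m) σ) p ∈ MyIdeal m i j k'),
        φ (Ideal.Quotient.mk (Iij m i (j - 1)) P) =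
          sqMk (m + 1) (MyIdeal m i j k') (MyIdeal m i j (k' + 1)) p hp →
        φ (Ideal.Quotient.mk (Iij m i (j - 1)) (permB m σ P)) =
          sqMk (m + 1) (MyIdeal m i j k') (MyIdeal m i j (k' + 1))
            (permB (m + 1) (extPerm m (m + 1) (Nat.le_succ m) σ) p) hq)) := by
  refine ⟨⟨(Ideal.quotientMapₐ _ _ (Iij_le_comap_L0Ideal m i j)).toLinearMap, fun P => rfl, ?_, ?_⟩,
    ⟨mulSQ _ (xv_last_pow_mem_LkIdeal k) (Iij_le_comap_colon_LkIdeal k), fun P => rfl,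
      mulSQ_surjective _ _ _ fun p => exists_sub_xv_last_pow_mul_inclB_mem hk1, ?_⟩,
    ⟨mulSQ _ (yv_last_pow_mem_MyIdeal k') (Iij_le_comap_colon_MyIdeal hj hk'1), fun P => rfl,
      mulSQ_surjective _ _ _ fun p => exists_sub_yv_last_pow_mul_inclB_mem hk'1, ?_⟩⟩
  · exact Function.Surjective.of_comp (g := Ideal.Quotient.mk _)
      (surjective_mkₐ_comp_inclB xv_last_mem_L0Ideal yv_last_mem_L0Ideal)
  · intro σ P Q h
    exact (congrArg (Ideal.Quotient.mk _) (permB_inclB σ P)).symm.trans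
      (Ideal.Quotient.mk_map_eq_of_mk_eq _ (map_extPerm_L0Ideal_le σ) h)
  · intro σ P p hp hq
    refine mulSQ_mk_map_eq _ _ _ (permB m σ) _ (permB_inclB σ) ?_ (map_extPerm_LkIdeal_le σ _)
      hp hq
    rw [map_pow, permB_extPerm_xv_last]
  · intro σ P p hp hq
    refine mulSQ_mk_map_eq _ _ _ (permB m σ) _ (permB_inclB σ) ?_ (map_extPerm_MyIdeal_le σ _)
      hp hq
    rw [map_pow, permB_extPerm_yv_last]

end
end
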